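/- arXiv:2211.00367 — 6 statements merged into one kernel-verified Lean document; each statement's English description precedes it below -/
import Mathlib

section
/- Under FCFS, in a busy period with n ≥ 3 jobs, at least one job has sojourn time at least j + δ. Specifically, any job k ≥ 2 whose preceding inter-arrival time is j_1 = j+1−δ and whose predecessor has sojourn time at least 2j − Y_{k−1} + 1 satisfies W_k ≥ j + δ; such a job exists when n ≥ 3. -/
/-!
A short inter-arrival time `j + 1 - δ` raises the sojourn time by `δ - 1`, while every job after
the first of a busy period arrives before its predecessor leaves and so stays more than `j`.
Hence the job just after a short gap at position `k ≥ 3` stays at least `j + 1 + (δ - 1)`.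
-/

theorem sojourn_eq_add_of_short_gap {n k : ℕ} {j δ : ℤ} {Y W : ℕ → ℤ}
    (hrec : ∀ k, 2 ≤ k → k ≤ n → W k = W (k - 1) - Y (k - 1) + j)
    (hk2 : 2 ≤ k) (hkn : k ≤ n) (hYk : Y (k - 1) = j + 1 - δ) :
    W k = W (k - 1) + (δ - 1) := by
  rw [hrec k hk2 hkn, hYk]
  ring

theorem lt_sojourn_of_busy {n k : ℕ} {j : ℤ} {Y W : ℕ → ℤ}
    (hrec : ∀ k, 2 ≤ k → k ≤ n → W k = W (k - 1) - Y (k - 1) + j)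
    (hbusy : ∀ k, 2 ≤ k → k ≤ n → Y (k - 1) < W (k - 1))
    (hk2 : 2 ≤ k) (hkn : k ≤ n) :
    j < W k := by
  have := hbusy k hk2 hkn
  rw [hrec k hk2 hkn]
  linarith

theorem fcfs_exists_large_sojourn_general
    (n : ℕ) (j δ : ℤ) (Y W : ℕ → ℤ)
    (hδ1 : 1 ≤ δ)
    (hrec : ∀ k, 2 ≤ k → k ≤ n → W k = W (k - 1) - Y (k - 1) + j)
    (hbusy : ∀ k, 2 ≤ k → k ≤ n → Y (k - 1) < W (k - 1))
    (hj1 : ∃ k, 3 ≤ k ∧ k ≤ n ∧ Y (k - 1) = j + 1 - δ) :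
    (∀ k, 2 ≤ k → k ≤ n → Y (k - 1) = j + 1 - δ →
        2 * j - Y (k - 1) + 1 ≤ W (k - 1) → j + δ ≤ W k) ∧
      (∃ k, 2 ≤ k ∧ k ≤ n ∧ j + δ ≤ W k) := by
  refine ⟨fun k hk2 hkn hYk hWk => ?_, ?_⟩
  · rw [sojourn_eq_add_of_short_gap hrec hk2 hkn hYk]
    rw [hYk] at hWk
    linarith
  · obtain ⟨k, hk3, hkn, hYk⟩ := hj1
    have hprev : j < W (k - 1) := lt_sojourn_of_busy hrec hbusy (by omega) (by omega)
    refine ⟨k, by omega, hkn, ?_⟩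
    rw [sojourn_eq_add_of_short_gap hrec (by omega) hkn hYk]
    linarith

/-- FCFS, busy period with `n ≥ 3` jobs: any job `k ≥ 2` whose preceding
inter-arrival time equals `j₁ = j+1-δ` and whose predecessor has sojourn time
at least `2j - Y (k-1) + 1` satisfies `W k ≥ j + δ`; and (since a busy period
with `n ≥ 3` jobs contains an inter-arrival equal to `j₁` at position `k ≥ 3`)
some job has sojourn time at least `j + δ`. -/
theorem fcfs_exists_large_sojourn
    (n : ℕ) (j δ : ℤ) (Y W : ℕ → ℤ)
    (hδ1 : 1 ≤ δ) (hδ2 : 2 * δ ≤ j)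
    (hn : 3 ≤ n)
    (hY : ∀ i, Y i = j + 1 - δ ∨ Y i = j + 1 + δ)
    (hW1 : W 1 = j)
    (hrec : ∀ k, 2 ≤ k → k ≤ n → W k = W (k - 1) - Y (k - 1) + j)
    (hbusy : ∀ k, 2 ≤ k → k ≤ n → Y (k - 1) < W (k - 1))
    (hj1 : ∃ k, 3 ≤ k ∧ k ≤ n ∧ Y (k - 1) = j + 1 - δ) :
    (∀ k, 2 ≤ k → k ≤ n → Y (k - 1) = j + 1 - δ →
        2 * j - Y (k - 1) + 1 ≤ W (k - 1) → j + δ ≤ W k) ∧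
      (∃ k, 2 ≤ k ∧ k ≤ n ∧ j + δ ≤ W k) :=
  fcfs_exists_large_sojourn_general n j δ Y W hδ1 hrec hbusy hj1
end

section
/- Under FCFS, exactly one job in each busy period is a priority job (has sojourn time exactly j): the first job; all subsequent jobs in the busy period have sojourn time at least j+1. -/
theorem add_one_le_of_eq_sub_add_of_lt {W Y W' j : ℤ} (hW' : W' = W - Y + j)
    (hYW : Y < W) : j + 1 ≤ W' := by
  omega

theorem fcfs_unique_priority_job_general
    (n : ℕ) (j : ℤ) (Y W : ℕ → ℤ)
    (hW1 : W 1 = j)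
    (hrec : ∀ k, 2 ≤ k → k ≤ n → W k = W (k - 1) - Y (k - 1) + j)
    (hbusy : ∀ k, 2 ≤ k → k ≤ n → Y (k - 1) < W (k - 1)) :
    W 1 = j ∧
      (∀ k, 2 ≤ k → k ≤ n → j + 1 ≤ W k) ∧
      (∀ k, 1 ≤ k → k ≤ n → W k = j → k = 1) := by
  have hlater : ∀ k, 2 ≤ k → k ≤ n → j + 1 ≤ W k := fun k hk hkn =>
    add_one_le_of_eq_sub_add_of_lt (hrec k hk hkn) (hbusy k hk hkn)
  refine ⟨hW1, hlater, fun k hk hkn hWk => ?_⟩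
  by_contra hk1
  have := hlater k (by omega) hkn
  omega

/-- Under FCFS, exactly one job in each busy period is a priority job (sojourn
time exactly `j`), namely the first; every subsequent job of the busy period
has sojourn time at least `j + 1`. -/
theorem fcfs_unique_priority_job
    (n : ℕ) (j δ : ℤ) (Y W : ℕ → ℤ)
    (hδ1 : 1 ≤ δ) (hδ2 : 2 * δ ≤ j)
    (hY : ∀ i, Y i = j + 1 - δ ∨ Y i = j + 1 + δ)
    (hW1 : W 1 = j)
    (hrec : ∀ k, 2 ≤ k → k ≤ n → W k = W (k - 1) - Y (k - 1) + j)
    (hbusy : ∀ k, 2 ≤ k → k ≤ n → Y (k - 1) < W (k - 1)) :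
    W 1 = j ∧
      (∀ k, 2 ≤ k → k ≤ n → j + 1 ≤ W k) ∧
      (∀ k, 1 ≤ k → k ≤ n → W k = j → k = 1) :=
  fcfs_unique_priority_job_general n j Y W hW1 hrec hbusy
end

section
/- Let a busy period under SPST have length n, with n_A blocks of type A containing n(A_1),...,n(A_{n_A}) jobs (total n_{j_1}), n_B blocks of type B (total n_{j_2} jobs), n_{j_1} + n_{j_2} = n − 1, and n_A − n_B ∈ {0,1}. If the number of priority jobs is at least 1 + n_{j_2} + ∑_i ⌊n(A_i)/2⌋, then it is at least ⌈n/2⌉. -/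
/-- Abstract combinatorial form of the SPST priority-job lemma: block A sizes
`a i ≥ 1` sum to `n_{j₁}`, `nB ≤ n_{j₂}`, `n_{j₁} + n_{j₂} = n - 1`,
`nA - nB ∈ {0,1}`, and in the case `nA = nB + 1` with `n` odd either some
`a i` is even or `nB ≤ n_{j₂} - 1`. If the number of priority jobs `P` is at
least `1 + n_{j₂} + Σ ⌊a i / 2⌋`, then `P ≥ ⌈n/2⌉`. -/
theorem spst_priority_count_abstract
    (n nA nB nj1 nj2 P : ℕ) (a : ℕ → ℕ)
    (ha : ∀ i < nA, 1 ≤ a i)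
    (hsum : ∑ i ∈ Finset.range nA, a i = nj1)
    (hBle : nB ≤ nj2)
    (hn1 : 1 ≤ n)
    (hn : nj1 + nj2 = n - 1)
    (hAB : nB ≤ nA ∧ nA ≤ nB + 1)
    (hpar : (nA = nB + 1 ∧ Odd n) → ((∃ i < nA, Even (a i)) ∨ nB ≤ nj2 - 1))
    (hP : 1 + nj2 + (∑ i ∈ Finset.range nA, a i / 2) ≤ P) :
    (n + 1) / 2 ≤ P := by
  have h1 : nj1 ≤ 2 * (∑ i ∈ Finset.range nA, a i / 2) + nA := by
    rw [← hsum]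
    calc ∑ i ∈ Finset.range nA, a i
        ≤ ∑ i ∈ Finset.range nA, (2 * (a i / 2) + 1) :=
          Finset.sum_le_sum (fun i _ => by omega)
      _ = 2 * (∑ i ∈ Finset.range nA, a i / 2) + nA := by
          rw [Finset.sum_add_distrib, ← Finset.mul_sum, Finset.sum_const,
            Finset.card_range, smul_eq_mul, mul_one]
  omega
end

section
/- In a busy period under SPST where the length n is even and every block A has an even number of jobs, the number of priority jobs is at least n/2 + 1; more generally, if m_e ≥ 2 blocks A have an even number of jobs and n is even, there are at least n/2 + m_e/2 priority jobs. -/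
/-- SPST, even-length busy period: with the usual block structure, if the
number of priority jobs is `P = 1 + n_{j₂} + Σ ⌊a i / 2⌋`, then: if every block
A has an even number of jobs, `P ≥ n/2 + 1`; more generally if `mₑ ≥ 2` blocks
A have an even number of jobs, `P ≥ n/2 + mₑ/2`. -/
theorem spst_priority_count_even_blocks
    (n nA nB nj1 nj2 me P : ℕ) (a : ℕ → ℕ)
    (ha : ∀ i < nA, 1 ≤ a i)
    (hsum : ∑ i ∈ Finset.range nA, a i = nj1)
    (hBle : nB ≤ nj2)
    (hn1 : 1 ≤ n)
    (hn : nj1 + nj2 = n - 1)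
    (hAB : nB ≤ nA ∧ nA ≤ nB + 1)
    (hneven : Even n)
    (hme : me = ((Finset.range nA).filter (fun i => Even (a i))).card)
    (hP : P = 1 + nj2 + (∑ i ∈ Finset.range nA, a i / 2)) :
    ((∀ i < nA, Even (a i)) → n / 2 + 1 ≤ P) ∧
      (2 ≤ me → n / 2 + me / 2 ≤ P) := by
  obtain ⟨k, hk⟩ := hneven
  have key : 2 * (∑ i ∈ Finset.range nA, a i / 2)
      + ∑ i ∈ Finset.range nA, a i % 2 = nj1 := by
    rw [← hsum, Finset.mul_sum, ← Finset.sum_add_distrib]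
    exact Finset.sum_congr rfl fun i _ => by omega
  have hmod : ∑ i ∈ Finset.range nA, a i % 2 = nA - me := by
    have h1 : ∑ i ∈ Finset.range nA, a i % 2
        = ((Finset.range nA).filter (fun i => ¬ Even (a i))).card := by
      rw [Finset.card_filter]
      refine Finset.sum_congr rfl fun i _ => ?_
      by_cases h : Even (a i)
      · simp [h, Nat.even_iff.mp h]
      · simp [h, Nat.odd_iff.mp (Nat.not_even_iff_odd.mp h)]
    rw [h1, Finset.filter_not, Finset.card_sdiff_of_subset (Finset.filter_subset _ _),
      Finset.card_range, ← hme]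
  have hmele : me ≤ nA := by
    rw [hme]; exact (Finset.card_filter_le _ _).trans (by simp)
  constructor
  · intro hall
    have : me = nA := by
      rw [hme]
      rw [Finset.filter_true_of_mem (fun i hi => hall i (Finset.mem_range.mp hi))]
      simp
    omega
  · intro h2
    omega
end

section
/- Let n ≥ 3, κ ≥ log 2, j ≥ 1, δ ≥ 1, and T ≥ j. If n is odd, then ⌈n/2⌉·exp(−κj) + (n − ⌈n/2⌉)·exp(−κT) ≥ exp(−κj) + (n−1)·exp(−κ(j+1)). -/
/-! Write `n = 2m + 1`, so `⌈n/2⌉ = m + 1`, and put `e = exp(-κj)`. Since `exp(-κ(j+1)) = e·exp(-κ)`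
and `κ ≥ log 2` gives `2·exp(-κ) ≤ 1`, the `2m` FCFS terms `e·exp(-κ)` are together at most
`m·e`, which the `m` extra priority terms of SPST already supply; the remaining SPST terms
`exp(-κT)` are nonnegative. -/

open Real

lemma Real.two_mul_exp_neg_le_one {κ : ℝ} (hκ : log 2 ≤ κ) : 2 * exp (-κ) ≤ 1 := by
  have h2 : 2 ≤ exp κ := by simpa [exp_log] using exp_le_exp.mpr hκ
  rw [exp_neg, ← div_eq_mul_inv, div_le_one (exp_pos κ)]
  exact h2

lemma Real.exp_neg_mul_add_one (κ j : ℝ) : exp (-κ * (j + 1)) = exp (-κ * j) * exp (-κ) := by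
  rw [← exp_add]; ring_nf

theorem core_inequality_odd_general
    (n : ℕ) (κ j T : ℝ)
    (hodd : Odd n)
    (hκ : Real.log 2 ≤ κ) :
    Real.exp (-κ * j) + ((n : ℝ) - 1) * Real.exp (-κ * (j + 1)) ≤
      (((n + 1) / 2 : ℕ) : ℝ) * Real.exp (-κ * j) +
        ((n : ℝ) - (((n + 1) / 2 : ℕ) : ℝ)) * Real.exp (-κ * T) := by
  obtain ⟨m, rfl⟩ := hodd
  rw [show (2 * m + 1 + 1) / 2 = m + 1 by omega, exp_neg_mul_add_one]
  push_cast
  have hFCFS : 2 * m * (exp (-κ * j) * exp (-κ)) ≤ m * exp (-κ * j) := by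
    have := mul_le_mul_of_nonneg_left (two_mul_exp_neg_le_one hκ)
      (by positivity : (0 : ℝ) ≤ m * exp (-κ * j))
    linarith
  have hSPST : 0 ≤ (m : ℝ) * exp (-κ * T) := by positivity
  linarith

/-- Core inequality (odd case) of `R_SPST ≥ R_FCFS`: for odd `n ≥ 3`,
`κ ≥ log 2`, `j ≥ 1`, `δ ≥ 1`, `T ≥ j`, the SPST lower bound
`⌈n/2⌉·e^{-κj} + (n - ⌈n/2⌉)·e^{-κT}` dominates the FCFS upper bound
`e^{-κj} + (n-1)·e^{-κ(j+1)}`. -/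
theorem core_inequality_odd
    (n : ℕ) (κ j δ T : ℝ)
    (hn : 3 ≤ n) (hodd : Odd n)
    (hκ : Real.log 2 ≤ κ) (hj : 1 ≤ j) (hδ : 1 ≤ δ) (hT : j ≤ T) :
    Real.exp (-κ * j) + ((n : ℝ) - 1) * Real.exp (-κ * (j + 1)) ≤
      (((n + 1) / 2 : ℕ) : ℝ) * Real.exp (-κ * j) +
        ((n : ℝ) - (((n + 1) / 2 : ℕ) : ℝ)) * Real.exp (-κ * T) :=
  core_inequality_odd_general n κ j T hodd hκ
end

section
/- Let n_A, n_B, n_{j_1}, n_{j_2} be nonnegative integers with n_A = n_B, n_B ≤ n_{j_2}, n_{j_1} + n_{j_2} = n − 1, and let positive integers a_1,...,a_{n_A} sum to n_{j_1}. Then 1 + n_{j_2} + ∑_{i=1}^{n_A} ⌊a_i/2⌋ ≥ ⌈n/2⌉. -/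
/-- Case `nA = nB` of the SPST priority-job count: with block A sizes
`a i ≥ 1` summing to `n_{j₁}`, `nB ≤ n_{j₂}`, `n_{j₁} + n_{j₂} = n - 1`,
one has `1 + n_{j₂} + Σ ⌊a i / 2⌋ ≥ ⌈n/2⌉`. -/
theorem priority_count_case_eq
    (n nA nB nj1 nj2 : ℕ) (a : ℕ → ℕ)
    (ha : ∀ i < nA, 1 ≤ a i)
    (hsum : ∑ i ∈ Finset.range nA, a i = nj1)
    (hABeq : nA = nB)
    (hBle : nB ≤ nj2)
    (hn1 : 1 ≤ n)
    (hn : nj1 + nj2 = n - 1) :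
    (n + 1) / 2 ≤ 1 + nj2 + ∑ i ∈ Finset.range nA, a i / 2 := by
  have key : nj1 ≤ 2 * (∑ i ∈ Finset.range nA, a i / 2) + nA := by
    rw [← hsum]
    calc ∑ i ∈ Finset.range nA, a i
        ≤ ∑ i ∈ Finset.range nA, (2 * (a i / 2) + 1) := by
          refine Finset.sum_le_sum fun i _ => ?_
          omega
      _ = 2 * (∑ i ∈ Finset.range nA, a i / 2) + nA := by
          rw [Finset.sum_add_distrib, Finset.mul_sum, Finset.sum_const,
            Finset.card_range, smul_eq_mul, mul_one]
  omega
end
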